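/- For every k ≥ 4, every P_k-free graph G with χ(G) ≥ 2 has a vertex v with χ(N_G(v)) ≥ χ(G)/(k−2). -/

import Mathlib

open SimpleGraph

/-- The chromatic number of the subgraph of `G` induced on `S`, as a natural number. -/
noncomputable def chiSet {V : Type*} (G : SimpleGraph V) (S : Set V) : ℕ :=
  (G.induce S).chromaticNumber.toNat

/-- The chromatic number of `G`, as a natural number. -/
noncomputable def chi {V : Type*} (G : SimpleGraph V) : ℕ :=
  G.chromaticNumber.toNat

/-- `(A, B)` is an anticomplete pair: no edge of `G` joins `A` and `B`. -/
def Anticomplete {V : Type*} (G : SimpleGraph V) (A B : Set V) : Prop :=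
  ∀ a ∈ A, ∀ b ∈ B, ¬ G.Adj a b

/-- `G` is `H`-free: no induced subgraph of `G` is isomorphic to `H`. -/
def FreeOf {V W : Type*} (G : SimpleGraph V) (H : SimpleGraph W) : Prop :=
  IsEmpty (H ↪g G)

/-!
Gyárfás' path argument. Suppose every neighbourhood of `G` is `m`-colourable. Given a connected
induced subgraph `H` and a vertex `p` attached to it, colour the neighbours of `p` in `H` with `m`
colours. Every component `D` of the rest of `H` is attached to some neighbour `w` of `p` in `H`,
and an induced path from `w` into `D` extends to one from `p` into `H` by prepending `p`. By
induction, `H` is `j * m`-colourable when no induced path on `j + 2` vertices starts at `p` and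
runs into `H`. One more such step, at a vertex `x` of a component of a `P_k`-free graph, gives
`χ ≤ (k - 2) * m`.
-/

universe u

namespace SimpleGraph

section

variable {W : Type*} {H : SimpleGraph W}

theorem colorable_add_of_induce_compl {s : Set W} {a b : ℕ} (hs : (H.induce s).Colorable a)
    (hsc : (H.induce sᶜ).Colorable b) : H.Colorable (a + b) := by
  classical
  obtain ⟨c₁⟩ := hs
  obtain ⟨c₂⟩ := hsc
  let c : H.Coloring (Fin a ⊕ Fin b) := Coloring.mk
    (fun v => if hv : v ∈ s then .inl (c₁ ⟨v, hv⟩) else .inr (c₂ ⟨v, hv⟩)) fun {v w} hvw => by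
      by_cases hv : v ∈ s <;> by_cases hw : w ∈ s <;>
        simp only [hv, hw, dite_true, dite_false, ne_eq, reduceCtorEq, not_false_eq_true,
          Sum.inl.injEq, Sum.inr.injEq]
      · exact c₁.valid (v := ⟨v, hv⟩) (w := ⟨w, hw⟩) hvw
      · exact c₂.valid (v := ⟨v, hv⟩) (w := ⟨w, hw⟩) hvw
  simpa using c.colorable

theorem IsIsolated.eq_of_reachable {v w : W} (hv : H.IsIsolated v) (h : H.Reachable v w) :
    v = w := by
  obtain ⟨_ | ⟨hadj, _⟩⟩ := h
  · rfl
  · exact absurd hadj (hv _)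

theorem ConnectedComponent.toSimpleGraph_eq_bot_of_isIsolated {c : H.ConnectedComponent} {v : W}
    (hvc : v ∈ c.supp) (hv : H.IsIsolated v) : c.toSimpleGraph = ⊥ := by
  ext ⟨x, hx⟩ ⟨y, hy⟩
  have hvx := hv.eq_of_reachable (c.reachable_of_mem_supp hvc hx)
  have hvy := hv.eq_of_reachable (c.reachable_of_mem_supp hvc hy)
  subst hvx hvy
  simp

theorem ConnectedComponent.exists_adj_notMem (hH : H.Preconnected) {A : Set W}
    (c : (H.induce A).ConnectedComponent) {u : W} (hu : u ∉ Subtype.val '' c.supp) :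
    ∃ a ∈ c.supp, ∃ b ∉ A, H.Adj a b := by
  obtain ⟨d, -, ⟨a, ha, hda⟩, hd⟩ :=
    (hH c.out u).some.exists_boundary_dart (Subtype.val '' c.supp) ⟨c.out, c.out_eq, rfl⟩ hu
  refine ⟨a, ha, d.snd, fun hA => hd ⟨⟨d.snd, hA⟩, ?_, rfl⟩, hda ▸ d.adj⟩
  exact c.mem_supp_of_adj_mem_supp ha (hda ▸ d.adj : H.Adj a d.snd)

end

variable {V : Type u} {G : SimpleGraph V}

def HasInducedPathFrom (G : SimpleGraph V) (p : V) (S : Set V) (n : ℕ) : Prop :=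
  ∃ f : pathGraph (n + 1) ↪g G, f 0 = p ∧ ∀ i, i ≠ 0 → f i ∈ S

theorem hasInducedPathFrom_zero (p : V) (S : Set V) : G.HasInducedPathFrom p S 0 :=
  ⟨⟨⟨fun _ => p, fun _ _ _ => Subsingleton.elim (α := Fin 1) _ _⟩, by simp [pathGraph_adj]⟩, rfl,
    fun i hi => absurd (Subsingleton.elim (α := Fin 1) i 0) hi⟩

theorem HasInducedPathFrom.mono {p : V} {S T : Set V} {n : ℕ} (h : G.HasInducedPathFrom p S n)
    (hST : S ⊆ T) : G.HasInducedPathFrom p T n :=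
  let ⟨f, hf0, hfS⟩ := h
  ⟨f, hf0, fun i hi => hST (hfS i hi)⟩

theorem HasInducedPathFrom.cons {p q : V} {S : Set V} {n : ℕ} (h : G.HasInducedPathFrom q S n)
    (hpq : G.Adj p q) (hpS : p ∉ S) (hnadj : ∀ s ∈ S, ¬ G.Adj p s) :
    G.HasInducedPathFrom p (insert q S) (n + 1) := by
  obtain ⟨f, hf0, hfS⟩ := h
  have adj_iff (i : Fin (n + 1)) : G.Adj p (f i) ↔ i = 0 := by
    refine ⟨fun h => by_contra fun hi => hnadj _ (hfS i hi) h, ?_⟩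
    rintro rfl
    rwa [hf0]
  have ne (i : Fin (n + 1)) : p ≠ f i := by
    by_cases hi : i = 0
    · exact hi ▸ hf0 ▸ G.ne_of_adj hpq
    · exact fun h => hpS (h ▸ hfS i hi)
  have mem (i : Fin (n + 1)) : f i ∈ insert q S := by
    by_cases hi : i = 0
    · exact hi ▸ hf0 ▸ Set.mem_insert _ _
    · exact Set.mem_insert_of_mem _ (hfS i hi)
  refine ⟨⟨⟨Fin.cons p f, fun i j hij => ?_⟩, fun {i j} => ?_⟩, rfl, fun i hi => ?_⟩
  · cases i using Fin.cases <;> cases j using Fin.cases <;>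
      simp_all [(ne _).symm, f.injective.eq_iff]
  · change G.Adj ((Fin.cons p f : Fin (n + 2) → V) i) ((Fin.cons p f : Fin (n + 2) → V) j) ↔ _
    cases i using Fin.cases <;> cases j using Fin.cases
    · simp
    · simp only [Fin.cons_zero, Fin.cons_succ, adj_iff, pathGraph_adj, Fin.ext_iff, Fin.val_succ,
        Fin.val_zero]
      omega
    · simp only [Fin.cons_zero, Fin.cons_succ, G.adj_comm (f _), adj_iff, pathGraph_adj,
        Fin.ext_iff, Fin.val_succ, Fin.val_zero]
      omega
    · simp [pathGraph_adj]
  · cases i using Fin.cases with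
    | zero => exact absurd rfl hi
    | succ i => exact mem i

def Embedding.induceComponent {W : Type*} {H : SimpleGraph W} (e : H ↪g G) {A : Set W}
    (c : (H.induce A).ConnectedComponent) : c.toSimpleGraph ↪g G :=
  e.comp ((Embedding.induce A).comp (Embedding.induce c.supp))

def InducedPathColoringBound (G : SimpleGraph V) (n N : ℕ) : Prop :=
  ∀ ⦃W : Type u⦄ (H : SimpleGraph W) (e : H ↪g G) (p : V), H.Connected → p ∉ Set.range e →
    (∃ w, G.Adj p (e w)) → ¬ G.HasInducedPathFrom p (Set.range e) n → H.Colorable N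

/-- `p` may be a vertex of `H`; its component among its own non-neighbours is then `{p}`, which
costs the one colour `hN` asks for. -/
theorem InducedPathColoringBound.colorable_add {n N m : ℕ}
    (hbound : G.InducedPathColoringBound n N) {W : Type u} {H : SimpleGraph W} (e : H ↪g G)
    (hH : H.Preconnected) {p : V} (hm : (G.induce (G.neighborSet p)).Colorable m)
    (hp : ∃ u, p = e u ∨ G.Adj p (e u)) (hN : p ∈ Set.range e → 0 < N)
    (hpath : ¬ G.HasInducedPathFrom p (Set.range e) (n + 1)) :
    H.Colorable (m + N) := by
  let A : Set W := {w | ¬ G.Adj p (e w)}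
  refine colorable_add_of_induce_compl (s := Aᶜ) ?_ ?_
  · exact hm.of_hom (induceHom e.toHom fun w hw => not_not.mp hw)
  rw [compl_compl, colorable_iff_forall_connectedComponent]
  intro c
  by_cases hpc : p ∈ Set.range (e.induceComponent c)
  · obtain ⟨⟨x, hx⟩, hpx⟩ := hpc
    have hiso : (H.induce A).IsIsolated x := fun y hxy => y.2 (hpx ▸ e.map_rel_iff.mpr hxy)
    rw [c.toSimpleGraph_eq_bot_of_isIsolated hx hiso]
    exact (colorable_one_iff.mpr rfl).mono (hN ⟨_, hpx⟩)
  obtain ⟨u, hu⟩ := hp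
  obtain ⟨a, ha, b, hb, hab⟩ := c.exists_adj_notMem hH (u := u) <| by
    rintro ⟨a, ha, rfl⟩
    rcases hu with hpa | hadj
    · exact hpc ⟨⟨a, ha⟩, hpa.symm⟩
    · exact a.2 hadj
  refine hbound c.toSimpleGraph (e.induceComponent c) (e b) c.connected_toSimpleGraph ?_
    ⟨⟨a, ha⟩, e.map_rel_iff.mpr hab.symm⟩ fun hbpath => hpath ?_
  · rintro ⟨w, hw⟩
    exact hb (e.injective hw ▸ w.1.2)
  refine (hbpath.cons (not_not.mp hb) hpc ?_).mono ?_
  · rintro _ ⟨w, rfl⟩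
    exact w.1.2
  · rintro _ (rfl | ⟨w, rfl⟩) <;> exact Set.mem_range_self _

theorem inducedPathColoringBound {m : ℕ} (hm : ∀ v, (G.induce (G.neighborSet v)).Colorable m) :
    ∀ j, G.InducedPathColoringBound (j + 1) (j * m)
  | 0 => by
    intro _ _ e p _ _ ⟨w, hw⟩ hpath
    exact absurd (((hasInducedPathFrom_zero (e w) ∅).cons hw (by simp) (by simp)).mono
      (by simp)) hpath
  | j + 1 => by
    intro _ _ e p hH hpe hp hpath
    rw [Nat.succ_mul, add_comm]
    exact (inducedPathColoringBound hm j).colorable_add e hH.preconnected (hm p)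
      (hp.imp fun _ => Or.inr) (absurd · hpe) hpath

theorem colorable_of_freeOf_pathGraph {k m : ℕ} (hk : 4 ≤ k) (hG : FreeOf G (pathGraph k))
    (hm : ∀ v, (G.induce (G.neighborSet v)).Colorable m) (hm₀ : 0 < m) :
    G.Colorable ((k - 2) * m) := by
  obtain ⟨n, rfl⟩ : ∃ n, k = n + 4 := ⟨k - 4, by omega⟩
  rw [colorable_iff_forall_connectedComponent]
  intro c
  obtain ⟨x, hx⟩ := c.nonempty_supp
  have := (inducedPathColoringBound hm (n + 1)).colorable_add (Embedding.induce c.supp)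
    c.connected_toSimpleGraph.preconnected (hm x) ⟨⟨x, hx⟩, .inl rfl⟩
    (fun _ => Nat.mul_pos n.succ_pos hm₀) fun ⟨f, _⟩ => hG.false f
  rwa [show n + 4 - 2 = n + 1 + 1 by omega, Nat.succ_mul, add_comm]

end SimpleGraph

theorem chi_le_of_colorable {V : Type*} {G : SimpleGraph V} {n : ℕ} (h : G.Colorable n) :
    chi G ≤ n :=
  ENat.toNat_le_of_le_natCast h.chromaticNumber_le

theorem colorable_chiSet {V : Type*} [Finite V] (G : SimpleGraph V) (S : Set V) :
    (G.induce S).Colorable (chiSet G S) :=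
  colorable_chromaticNumber_of_fintype _

theorem chiSet_pos {V : Type*} [Finite V] {G : SimpleGraph V} {S : Set V} (hS : S.Nonempty) :
    0 < chiSet G S := by
  refine Nat.pos_of_ne_zero fun h => ?_
  have := colorable_chiSet G S
  rw [h, colorable_zero_iff] at this
  exact this.false ⟨_, hS.some_mem⟩

theorem exists_adj_of_two_le_chi {V : Type*} {G : SimpleGraph V} (h : 2 ≤ chi G) :
    ∃ a b, G.Adj a b := by
  by_contra! hG
  have : G.Colorable 1 := colorable_one_iff.mpr (by ext a b; simp [hG a b])
  have := chi_le_of_colorable this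
  omega

/-- For every `k ≥ 4`, every `P_k`-free graph `G` with `χ(G) ≥ 2` has a
vertex `v` with `χ(N_G(v)) ≥ χ(G) / (k − 2)`. -/
theorem stmt_4 {V : Type*} [Fintype V] (k : ℕ) (hk : 4 ≤ k) (G : SimpleGraph V)
    (hG : FreeOf G (pathGraph k)) (hchi : 2 ≤ chi G) :
    ∃ v : V, chi G ≤ (k - 2) * chiSet G (G.neighborSet v) := by
  obtain ⟨a, b, hab⟩ := exists_adj_of_two_le_chi hchi
  obtain ⟨v, -, hv⟩ := Finset.univ.exists_max_image (fun u => chiSet G (G.neighborSet u))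
    ⟨a, Finset.mem_univ a⟩
  refine ⟨v, chi_le_of_colorable (colorable_of_freeOf_pathGraph hk hG (fun u => ?_) ?_)⟩
  · exact (colorable_chiSet G _).mono (hv u (Finset.mem_univ u))
  · exact (chiSet_pos ⟨b, hab⟩).trans_le (hv a (Finset.mem_univ a))
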